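/- Let f, g : [a,b] → ℝ be integrable functions with m ≤ f(x) ≤ M and n ≤ g(x) ≤ N for a.e. x ∈ [a,b]. Then |(1/(b−a))∫_a^b f g − (1/(b−a))∫_a^b f · (1/(b−a))∫_a^b g| ≤ (1/4)(M − m)(N − n). -/

import Mathlib

open MeasureTheory Set

theorem gruss_inequality
    (a b m M p P : ℝ) (f g : ℝ → ℝ) (hab : a < b)
    (hf : IntervalIntegrable f volume a b)
    (hg : IntervalIntegrable g volume a b)
    (hfg : IntervalIntegrable (fun x => f x * g x) volume a b)
    (hfbound : ∀ᵐ x ∂volume, x ∈ Icc a b → m ≤ f x ∧ f x ≤ M)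
    (hgbound : ∀ᵐ x ∂volume, x ∈ Icc a b → p ≤ g x ∧ g x ≤ P) :
    |(1 / (b - a)) * (∫ x in a..b, f x * g x) -
        (1 / (b - a)) * (∫ x in a..b, f x) * ((1 / (b - a)) * ∫ x in a..b, g x)| ≤
      (1 / 4) * (M - m) * (P - p) := by
  have hI : (0:ℝ) < b - a := sub_pos.2 hab
  have hfb : ∀ᵐ x ∂(volume.restrict (Icc a b)), m ≤ f x ∧ f x ≤ M :=
    (ae_restrict_iff' measurableSet_Icc).2 hfbound
  have hgb : ∀ᵐ x ∂(volume.restrict (Icc a b)), p ≤ g x ∧ g x ≤ P :=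
    (ae_restrict_iff' measurableSet_Icc).2 hgbound
  set A := ∫ x in a..b, f x * g x with hAdef
  set B := ∫ x in a..b, f x with hBdef
  set C := ∫ x in a..b, g x with hCdef
  have hconstI : ∀ r : ℝ, (∫ _x in a..b, r) = r * (b - a) := by
    intro r; rw [intervalIntegral.integral_const, smul_eq_mul]; ring
  have hCl : p * (b - a) ≤ C := by
    rw [← hconstI p]
    exact intervalIntegral.integral_mono_ae_restrict hab.le intervalIntegrable_const hg
      (hgb.mono fun x hx => hx.1)
  have hCu : C ≤ P * (b - a) := by
    rw [← hconstI P]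
    exact intervalIntegral.integral_mono_ae_restrict hab.le hg intervalIntegrable_const
      (hgb.mono fun x hx => hx.2)
  have hBl : m * (b - a) ≤ B := by
    rw [← hconstI m]
    exact intervalIntegral.integral_mono_ae_restrict hab.le intervalIntegrable_const hf
      (hfb.mono fun x hx => hx.1)
  have hBu : B ≤ M * (b - a) := by
    rw [← hconstI M]
    exact intervalIntegral.integral_mono_ae_restrict hab.le hf intervalIntegrable_const
      (hfb.mono fun x hx => hx.2)
  have hmM : m ≤ M := le_of_mul_le_mul_right (hBl.trans hBu) hI
  have hpP : p ≤ P := le_of_mul_le_mul_right (hCl.trans hCu) hI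
  set μ := C / (b - a) with hμdef
  have hCμ : C = μ * (b - a) := by rw [hμdef, div_mul_cancel₀ _ hI.ne']
  have hμl : p ≤ μ := (le_div_iff₀ hI).2 hCl
  have hμu : μ ≤ P := (div_le_iff₀ hI).2 hCu
  set c := (m + M) / 2 with hcdef
  -- integrability facts
  have hg' : IntervalIntegrable (fun x => g x - μ) volume a b :=
    hg.sub intervalIntegrable_const
  have habs : IntervalIntegrable (fun x => |g x - μ|) volume a b := hg'.abs
  have hpos : IntervalIntegrable (fun x => max (g x - μ) 0) volume a b := by
    have hrw : (fun x => max (g x - μ) 0) = fun x => ((g x - μ) + |g x - μ|) / 2 := by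
      funext x
      rcases le_total (g x - μ) 0 with h | h
      · rw [max_eq_right h, abs_of_nonpos h]; ring
      · rw [max_eq_left h, abs_of_nonneg h]; ring
    rw [hrw]
    exact (hg'.add habs).div_const 2
  have hZero : (∫ x in a..b, (g x - μ)) = 0 := by
    rw [intervalIntegral.integral_sub hg intervalIntegrable_const, hconstI μ, ← hCdef, hCμ]
    ring
  have hAbsEq : (∫ x in a..b, |g x - μ|) = 2 * ∫ x in a..b, max (g x - μ) 0 := by
    have hrw : (fun x => |g x - μ|) = fun x => 2 * max (g x - μ) 0 - (g x - μ) := by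
      funext x
      rcases le_total (g x - μ) 0 with h | h
      · rw [max_eq_right h, abs_of_nonpos h]; ring
      · rw [max_eq_left h, abs_of_nonneg h]; ring
    rw [hrw, intervalIntegral.integral_sub (hpos.const_mul 2) hg',
      intervalIntegral.integral_const_mul, hZero]
    ring
  have hQ : (P - p) * ∫ x in a..b, max (g x - μ) 0 ≤ (P - μ) * ((μ - p) * (b - a)) := by
    have key : (∫ x in a..b, (P - p) * max (g x - μ) 0) ≤
        ∫ x in a..b, (P - μ) * (g x - p) := by
      refine intervalIntegral.integral_mono_ae_restrict hab.le (hpos.const_mul _)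
        (((hg.sub intervalIntegrable_const).const_mul _)) (hgb.mono fun x hx => ?_)
      obtain ⟨h1, h2⟩ := hx
      dsimp only
      rcases le_total (g x - μ) 0 with h | h
      · rw [max_eq_right h]; nlinarith
      · rw [max_eq_left h]; nlinarith
    rw [intervalIntegral.integral_const_mul, intervalIntegral.integral_const_mul,
      intervalIntegral.integral_sub hg intervalIntegrable_const, hconstI p, ← hCdef, hCμ] at key
    calc (P - p) * ∫ x in a..b, max (g x - μ) 0 ≤ (P - μ) * (μ * (b - a) - p * (b - a)) := key
      _ = (P - μ) * ((μ - p) * (b - a)) := by ring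
  have hAbsG : (∫ x in a..b, |g x - μ|) ≤ (P - p) / 2 * (b - a) := by
    rcases eq_or_lt_of_le hpP with h | h
    · -- p = P: g is a.e. constant p on [a,b] and μ = p
      have hμp : μ = p := le_antisymm (h ▸ hμu) hμl
      have : (∫ x in a..b, |g x - μ|) ≤ ∫ _x in a..b, (0:ℝ) := by
        refine intervalIntegral.integral_mono_ae_restrict hab.le habs
          intervalIntegrable_const (hgb.mono fun x hx => ?_)
        have : g x = μ := by rw [hμp]; linarith [hx.1, h ▸ hx.2]
        simp [this]
      rw [hconstI 0] at this
      nlinarith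
    · have hAE := hAbsEq
      have hQnn : (0:ℝ) ≤ ∫ x in a..b, max (g x - μ) 0 :=
        intervalIntegral.integral_nonneg hab.le (fun x _ => le_max_right (g x - μ) 0)
      nlinarith [hQ, mul_nonneg (sq_nonneg (P + p - 2 * μ)) hI.le]
  -- key identity
  have hprod : IntervalIntegrable (fun x => (f x - c) * (g x - μ)) volume a b := by
    have hrw : (fun x => (f x - c) * (g x - μ)) =
        fun x => f x * g x - μ * f x - c * (g x - μ) := by funext x; ring
    rw [hrw]
    exact (hfg.sub (hf.const_mul μ)).sub (hg'.const_mul c)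
  have hA : A - μ * B = ∫ x in a..b, (f x - c) * (g x - μ) := by
    have hrw : (fun x => (f x - c) * (g x - μ)) =
        fun x => f x * g x - μ * f x - c * (g x - μ) := by funext x; ring
    rw [hrw, intervalIntegral.integral_sub (hfg.sub (hf.const_mul μ)) (hg'.const_mul c),
      intervalIntegral.integral_sub hfg (hf.const_mul μ),
      intervalIntegral.integral_const_mul, intervalIntegral.integral_const_mul, hZero,
      ← hAdef, ← hBdef]
    ring
  have hbound : |A - μ * B| ≤ (M - m) / 2 * ((P - p) / 2 * (b - a)) := by
    rw [hA]
    calc |∫ x in a..b, (f x - c) * (g x - μ)|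
        ≤ ∫ x in a..b, |(f x - c) * (g x - μ)| :=
          intervalIntegral.abs_integral_le_integral_abs hab.le
      _ ≤ ∫ x in a..b, (M - m) / 2 * |g x - μ| := by
          refine intervalIntegral.integral_mono_ae_restrict hab.le hprod.abs
            (habs.const_mul _) (hfb.mono fun x hx => ?_)
          dsimp only
          rw [abs_mul]
          refine mul_le_mul_of_nonneg_right ?_ (abs_nonneg _)
          rw [abs_le]
          constructor <;> [linarith [hx.1]; linarith [hx.2]]
      _ = (M - m) / 2 * ∫ x in a..b, |g x - μ| := intervalIntegral.integral_const_mul _ _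
      _ ≤ (M - m) / 2 * ((P - p) / 2 * (b - a)) :=
          mul_le_mul_of_nonneg_left hAbsG (by linarith)
  have hEq : (1 / (b - a)) * A - (1 / (b - a)) * B * ((1 / (b - a)) * C) =
      (1 / (b - a)) * (A - μ * B) := by
    rw [hCμ]; field_simp
  rw [hEq, abs_mul, abs_of_pos (by positivity : (0:ℝ) < 1 / (b - a))]
  calc (1 / (b - a)) * |A - μ * B|
      ≤ (1 / (b - a)) * ((M - m) / 2 * ((P - p) / 2 * (b - a))) :=
        mul_le_mul_of_nonneg_left hbound (by positivity)
    _ = 1 / 4 * (M - m) * (P - p) := by field_simp; ring
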